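/- Let λ ∈ ℂ with λ ≠ 0 and |Re(λ)| < π/4, let w(z) := sech(πz/4), and define h(z) := e^{λz}·w(z) − (π/8)·(∫_ℝ w(s)²·e^{λs} ds)·w(z). Then h is not identically zero, h ∈ L²(ℝ), h' ∈ L²(ℝ), and for every z ∈ ℝ one has h'(z) + (π/4)·tanh(πz/4)·h(z) + (π/4)·w(z)·∫_ℝ w'(s)·h(s) ds = λ·h(z). In particular every λ in the open strip {0 < |Re λ| < π/4} is an eigenvalue of the operator D₀. -/

import Mathlib

open Real MeasureTheory

/-- The weight `w(z) = sech(πz/4)`. -/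
noncomputable def w (z : ℝ) : ℝ := 1 / Real.cosh (π * z / 4)

/-- The eigenfunction candidate `h(z) = e^{λz}w(z) − (π/8)(∫ w²e^{λs} ds)w(z)`. -/
noncomputable def hfun (lam : ℂ) (z : ℝ) : ℂ :=
  Complex.exp (lam * z) * (w z : ℂ)
    - ((π / 8 : ℝ) : ℂ) * (∫ s : ℝ, ((w s : ℂ)) ^ 2 * Complex.exp (lam * s)) * (w z : ℂ)

open Set
open scoped Complex

/-! Since `w' = -(π/4) tanh(πz/4) w`, every `h = (e^{λz} - c) w` satisfies
`h' + (π/4) tanh(πz/4) h = λ e^{λz} w`. Integrating `(w² e^{λs})' = 2 w w' e^{λs} + λ w² e^{λs}`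
over `ℝ` gives `∫ w' h = -(λ/2) ∫ w² e^{λs}`, the `c`-term being the case `λ = 0`; with
`c = (π/8) ∫ w² e^{λs}` the nonlocal term is then exactly `-λ c w`. Square integrability follows
from `w(z) ≤ 2 e^{-π|z|/4}` and `|Re λ| < π/4`, and `h ≢ 0` as `e^{λz}` is not constant. -/

lemma w_pos (z : ℝ) : 0 < w z := one_div_pos.2 (cosh_pos _)

@[fun_prop]
lemma continuous_w : Continuous w :=
  continuous_const.div (by fun_prop) fun _ => (cosh_pos _).ne'

lemma w_le_two_mul_exp_neg_abs (z : ℝ) : w z ≤ 2 * exp (-(π * |z| / 4)) := by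
  have habs : |π * z / 4| = π * |z| / 4 := by
    rw [abs_div, abs_mul, abs_of_pos pi_pos, abs_of_pos (by norm_num : (0 : ℝ) < 4)]
  have hcosh : exp (π * |z| / 4) / 2 ≤ cosh (π * z / 4) := by
    rw [← cosh_abs, habs, cosh_eq]
    linarith [exp_pos (-(π * |z| / 4))]
  calc w z ≤ 1 / (exp (π * |z| / 4) / 2) :=
        one_div_le_one_div_of_le (by positivity) hcosh
    _ = 2 * exp (-(π * |z| / 4)) := by rw [exp_neg]; field_simp

lemma hasDerivAt_w (z : ℝ) : HasDerivAt w (-(π / 4 * tanh (π * z / 4)) * w z) z := by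
  have hlin : HasDerivAt (fun z : ℝ => π * z / 4) (π / 4) z := by
    simpa using ((hasDerivAt_id z).const_mul π).div_const 4
  have hcosh : HasDerivAt (fun z => cosh (π * z / 4)) (sinh (π * z / 4) * (π / 4)) z :=
    (hasDerivAt_cosh _).comp z hlin
  have hinv : HasDerivAt (fun z => (cosh (π * z / 4))⁻¹) _ z := hcosh.inv (cosh_pos _).ne'
  rw [show w = fun z => (cosh (π * z / 4))⁻¹ from funext fun _ => one_div _]
  convert hinv using 1
  rw [tanh_eq_sinh_div_cosh]
  field_simp

lemma deriv_w (z : ℝ) : deriv w z = -(π / 4 * tanh (π * z / 4)) * w z :=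
  (hasDerivAt_w z).deriv

lemma abs_deriv_w_le (z : ℝ) : |deriv w z| ≤ π / 4 * w z := by
  rw [deriv_w, abs_mul, abs_neg, abs_mul, abs_of_pos (by positivity : 0 < π / 4),
    abs_of_pos (w_pos z), mul_assoc]
  gcongr
  exact mul_le_of_le_one_left (w_pos z).le (abs_tanh_lt_one _).le

lemma exp_mul_w_sq_le (a s : ℝ) : exp (a * s) * w s ^ 2 ≤ 4 * exp (a * s - π * |s| / 2) := by
  calc exp (a * s) * w s ^ 2 ≤ exp (a * s) * (2 * exp (-(π * |s| / 4))) ^ 2 := by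
        gcongr
        exacts [(w_pos s).le, w_le_two_mul_exp_neg_abs s]
    _ = 4 * (exp (a * s) * exp (-(π * |s| / 4)) * exp (-(π * |s| / 4))) := by ring
    _ = 4 * exp (a * s - π * |s| / 2) := by rw [← exp_add, ← exp_add]; ring_nf

lemma integrable_exp_mul_w_sq {a : ℝ} (ha : |a| < π / 2) :
    Integrable fun s => exp (a * s) * w s ^ 2 := by
  obtain ⟨hlo, hhi⟩ := abs_lt.1 ha
  have hmeas : AEStronglyMeasurable (fun s => exp (a * s) * w s ^ 2) :=
    (by fun_prop : Continuous fun s => exp (a * s) * w s ^ 2).aestronglyMeasurable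
  rw [← integrableOn_univ, ← Iic_union_Ioi (a := (0 : ℝ)), integrableOn_union]
  constructor
  · refine ((integrableOn_exp_mul_Iic (a := a + π / 2) (by linarith) 0).const_mul 4).mono'
      hmeas.restrict ?_
    filter_upwards [ae_restrict_mem measurableSet_Iic] with s hs
    rw [norm_of_nonneg (by positivity)]
    convert exp_mul_w_sq_le a s using 3
    rw [abs_of_nonpos hs]; ring
  · refine ((integrableOn_exp_mul_Ioi (a := a - π / 2) (by linarith) 0).const_mul 4).mono'
      hmeas.restrict ?_
    filter_upwards [ae_restrict_mem measurableSet_Ioi] with s hs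
    rw [norm_of_nonneg (by positivity)]
    convert exp_mul_w_sq_le a s using 3
    rw [abs_of_pos hs]; ring

lemma norm_cexp_mul_ofReal (lam : ℂ) (s : ℝ) : ‖cexp (lam * s)‖ = exp (lam.re * s) := by
  simp [Complex.norm_exp]

lemma integrable_w_sq_mul_cexp {lam : ℂ} (hre : |lam.re| < π / 2) :
    Integrable fun s : ℝ => (w s : ℂ) ^ 2 * cexp (lam * s) := by
  refine (integrable_exp_mul_w_sq hre).mono' (by fun_prop : Continuous fun s : ℝ =>
    (w s : ℂ) ^ 2 * cexp (lam * s)).aestronglyMeasurable (ae_of_all _ fun s => ?_)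
  rw [norm_mul, norm_pow, Complex.norm_real, norm_cexp_mul_ofReal, norm_of_nonneg (w_pos s).le,
    mul_comm]

lemma integrable_w_mul_deriv_w_mul_cexp {lam : ℂ} (hre : |lam.re| < π / 2) :
    Integrable fun s : ℝ => (w s : ℂ) * ((deriv w s : ℝ) : ℂ) * cexp (lam * s) := by
  refine ((integrable_exp_mul_w_sq hre).const_mul (π / 4)).mono'
    (((by fun_prop : Continuous fun s : ℝ => (w s : ℂ)).aestronglyMeasurable.mul
      (measurable_deriv w).complex_ofReal.aestronglyMeasurable).mul
        (by fun_prop : Continuous fun s : ℝ => cexp (lam * s)).aestronglyMeasurable)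
    (ae_of_all _ fun s => ?_)
  rw [norm_mul, norm_mul, Complex.norm_real, Complex.norm_real, norm_cexp_mul_ofReal,
    norm_of_nonneg (w_pos s).le, norm_eq_abs]
  calc w s * |deriv w s| * exp (lam.re * s) ≤ w s * (π / 4 * w s) * exp (lam.re * s) := by
        gcongr
        exacts [(w_pos s).le, abs_deriv_w_le s]
    _ = π / 4 * (exp (lam.re * s) * w s ^ 2) := by ring

lemma hasDerivAt_ofReal_w (s : ℝ) :
    HasDerivAt (fun s : ℝ => (w s : ℂ)) ((deriv w s : ℝ) : ℂ) s :=
  (hasDerivAt_w s).differentiableAt.hasDerivAt.ofReal_comp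

lemma hasDerivAt_cexp_mul_ofReal (lam : ℂ) (s : ℝ) :
    HasDerivAt (fun s : ℝ => cexp (lam * s)) (lam * cexp (lam * s)) s := by
  simpa [mul_comm] using (((hasDerivAt_id (s : ℂ)).const_mul lam).cexp).comp_ofReal

lemma integral_w_mul_deriv_w_mul_cexp {lam : ℂ} (hre : |lam.re| < π / 2) :
    ∫ s : ℝ, (w s : ℂ) * ((deriv w s : ℝ) : ℂ) * cexp (lam * s)
      = -(lam / 2) * ∫ s : ℝ, (w s : ℂ) ^ 2 * cexp (lam * s) := by
  have hint := integrable_w_mul_deriv_w_mul_cexp hre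
  have hint_sq := integrable_w_sq_mul_cexp hre
  have hderiv (s : ℝ) : HasDerivAt (fun s : ℝ => (w s : ℂ) ^ 2 * cexp (lam * s))
      (2 * ((w s : ℂ) * ((deriv w s : ℝ) : ℂ) * cexp (lam * s))
        + lam * ((w s : ℂ) ^ 2 * cexp (lam * s))) s := by
    refine (((hasDerivAt_ofReal_w s).pow 2).mul (hasDerivAt_cexp_mul_ofReal lam s)).congr_deriv ?_
    simp only [Pi.pow_apply]
    push_cast
    ring
  have h0 := integral_eq_zero_of_hasDerivAt_of_integrable hderiv
    ((hint.const_mul 2).add (hint_sq.const_mul lam)) hint_sq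
  rw [integral_add (hint.const_mul 2) (hint_sq.const_mul lam), integral_const_mul,
    integral_const_mul] at h0
  linear_combination h0 / 2

lemma integral_deriv_w_mul_cexp_sub_mul_w {lam : ℂ} (hre : |lam.re| < π / 2) (c : ℂ) :
    ∫ s : ℝ, ((deriv w s : ℝ) : ℂ) * ((cexp (lam * s) - c) * w s)
      = -(lam / 2) * ∫ s : ℝ, (w s : ℂ) ^ 2 * cexp (lam * s) := by
  have hre0 : |(0 : ℂ).re| < π / 2 := by simpa using pi_div_two_pos
  have hint0 : Integrable fun s : ℝ => (w s : ℂ) * ((deriv w s : ℝ) : ℂ) := by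
    simpa using integrable_w_mul_deriv_w_mul_cexp hre0
  have hzero : ∫ s : ℝ, (w s : ℂ) * ((deriv w s : ℝ) : ℂ) = 0 := by
    simpa using integral_w_mul_deriv_w_mul_cexp hre0
  calc ∫ s : ℝ, ((deriv w s : ℝ) : ℂ) * ((cexp (lam * s) - c) * w s)
      = ∫ s : ℝ, ((w s : ℂ) * ((deriv w s : ℝ) : ℂ) * cexp (lam * s)
          - c * ((w s : ℂ) * ((deriv w s : ℝ) : ℂ))) := by
        congr 1; ext s; ring
    _ = -(lam / 2) * ∫ s : ℝ, (w s : ℂ) ^ 2 * cexp (lam * s) := by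
        rw [integral_sub (integrable_w_mul_deriv_w_mul_cexp hre) (hint0.const_mul c),
          integral_const_mul, hzero, mul_zero, sub_zero, integral_w_mul_deriv_w_mul_cexp hre]

lemma hasDerivAt_cexp_sub_mul_w (lam c : ℂ) (z : ℝ) :
    HasDerivAt (fun z : ℝ => (cexp (lam * z) - c) * w z)
      (lam * cexp (lam * z) * w z + (cexp (lam * z) - c) * ((deriv w z : ℝ) : ℂ)) z :=
  ((hasDerivAt_cexp_mul_ofReal lam z).sub_const c).mul (hasDerivAt_ofReal_w z)

lemma memLp_two_cexp_mul_w {lam : ℂ} (hre : |lam.re| < π / 4) :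
    MemLp (fun z : ℝ => cexp (lam * z) * w z) 2 := by
  rw [memLp_two_iff_integrable_sq_norm (by fun_prop : Continuous fun z : ℝ =>
    cexp (lam * z) * w z).aestronglyMeasurable]
  refine (integrable_exp_mul_w_sq (a := 2 * lam.re) (by rw [abs_mul, abs_two]; linarith)).congr
    (ae_of_all _ fun z => ?_)
  dsimp only
  rw [norm_mul, norm_cexp_mul_ofReal, Complex.norm_real, norm_of_nonneg (w_pos z).le, mul_pow,
    ← exp_nat_mul]
  ring_nf

lemma memLp_two_cexp_sub_mul_w {lam : ℂ} (hre : |lam.re| < π / 4) (c : ℂ) :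
    MemLp (fun z : ℝ => (cexp (lam * z) - c) * w z) 2 := by
  have hw : MemLp (fun z : ℝ => (w z : ℂ)) 2 := by
    simpa using memLp_two_cexp_mul_w (lam := 0) (by simpa using (by positivity : 0 < π / 4))
  convert (memLp_two_cexp_mul_w hre).sub (hw.const_mul c) using 1
  ext z
  simp only [Pi.sub_apply]
  ring

lemma memLp_two_deriv_cexp_sub_mul_w {lam : ℂ} (hre : |lam.re| < π / 4) (c : ℂ) :
    MemLp (deriv fun z : ℝ => (cexp (lam * z) - c) * w z) 2 := by
  have hmeas : AEStronglyMeasurable fun z : ℝ => (cexp (lam * z) - c) * ((deriv w z : ℝ) : ℂ) :=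
    (by fun_prop : Continuous fun z : ℝ => cexp (lam * z) - c).aestronglyMeasurable.mul
      (measurable_deriv w).complex_ofReal.aestronglyMeasurable
  have hbound : MemLp (fun z : ℝ => (cexp (lam * z) - c) * ((deriv w z : ℝ) : ℂ)) 2 := by
    refine (memLp_two_cexp_sub_mul_w hre c).of_le_mul (c := π / 4) hmeas
      (ae_of_all _ fun z => ?_)
    rw [norm_mul, norm_mul, Complex.norm_real, Complex.norm_real, norm_eq_abs,
      norm_of_nonneg (w_pos z).le, mul_left_comm]
    gcongr
    exact abs_deriv_w_le z
  convert ((memLp_two_cexp_mul_w hre).const_mul lam).add hbound using 1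
  ext z
  rw [(hasDerivAt_cexp_sub_mul_w lam c z).deriv, Pi.add_apply, mul_assoc]

lemma exists_cexp_sub_mul_w_ne_zero {lam : ℂ} (hlam : lam ≠ 0) (c : ℂ) :
    ∃ z : ℝ, (cexp (lam * z) - c) * w z ≠ 0 := by
  by_contra! h
  have hconst : (fun z : ℝ => cexp (lam * z)) = fun _ => c := funext fun z => by
    simpa [sub_eq_zero, (w_pos z).ne'] using h z
  have hderiv := hasDerivAt_cexp_mul_ofReal lam 0
  rw [hconst] at hderiv
  simpa [hlam] using hderiv.unique (hasDerivAt_const 0 c)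

/-- Every `λ ≠ 0` in the open strip `|Re λ| < π/4` is an eigenvalue of the operator
`D₀h = h' + (π/4)tanh(πz/4)h + (π/4)w⟨w',h⟩`, with eigenfunction
`h(z) = e^{λz}w(z) − (π/8)⟨w², e^{λ·}⟩w(z)` belonging to `H¹(ℝ)`. -/
theorem strip_point_spectrum (lam : ℂ) (hlam : lam ≠ 0) (hre : |lam.re| < π / 4) :
    (∃ z : ℝ, hfun lam z ≠ 0) ∧
    MemLp (hfun lam) 2 volume ∧
    MemLp (deriv (hfun lam)) 2 volume ∧
    ∀ z : ℝ, deriv (hfun lam) z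
        + ((π / 4 * Real.tanh (π * z / 4) : ℝ) : ℂ) * hfun lam z
        + ((π / 4 * w z : ℝ) : ℂ) * ∫ s : ℝ, ((deriv w s : ℝ) : ℂ) * hfun lam s
      = lam * hfun lam z := by
  set I := ∫ s : ℝ, (w s : ℂ) ^ 2 * cexp (lam * s)
  have hfun_eq : hfun lam = fun z : ℝ => (cexp (lam * z) - ((π / 8 : ℝ) : ℂ) * I) * w z := by
    ext z; rw [hfun]; ring
  rw [hfun_eq]
  refine ⟨exists_cexp_sub_mul_w_ne_zero hlam _, memLp_two_cexp_sub_mul_w hre _,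
    memLp_two_deriv_cexp_sub_mul_w hre _, fun z => ?_⟩
  rw [(hasDerivAt_cexp_sub_mul_w lam _ z).deriv,
    integral_deriv_w_mul_cexp_sub_mul_w (by linarith [pi_pos]), deriv_w]
  push_cast
  ring
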